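/- Let ℓ₁ = s₂ + s₃, ℓ₂ = s₁ + s₃, ℓ₃ = s₁ + s₂ in ℚ[s₁,s₂,s₃], and let I be the ideal generated by the six polynomials (ℓᵢ+1)(ℓⱼ+1) for i ≠ j together with sₖ(ℓₖ+1)(ℓₖ+2) for k = 1,2,3. Then the polynomial (s₁+s₂+s₃+3/2)(s₁+s₂+s₃+2)² belongs to I. -/
import Mathlib


open MvPolynomial

/-- `ℓ₁ = s₂+s₃`, `ℓ₂ = s₁+s₃`, `ℓ₃ = s₁+s₂` in `ℚ[s₁,s₂,s₃]`. -/
noncomputable def ell (k : Fin 3) : MvPolynomial (Fin 3) ℚ :=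
  ∑ j ∈ Finset.univ.erase k, X j

/-- The ideal generated by `(ℓᵢ+1)(ℓⱼ+1)` for `i ≠ j` and `sₖ(ℓₖ+1)(ℓₖ+2)`. -/
noncomputable def I₁ : Ideal (MvPolynomial (Fin 3) ℚ) :=
  Ideal.span ({p | ∃ i j : Fin 3, i ≠ j ∧ p = (ell i + 1) * (ell j + 1)} ∪
    {p | ∃ k : Fin 3, p = X k * ((ell k + 1) * (ell k + 2))})

lemma ell_eq (k : Fin 3) : ell k = X 0 + X 1 + X 2 - X k := by
  rw [ell, Finset.sum_erase_eq_sub (Finset.mem_univ k), Fin.sum_univ_three]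

lemma gmem (i j : Fin 3) (h : i ≠ j) : (ell i + 1) * (ell j + 1) ∈ I₁ :=
  Ideal.subset_span (Or.inl ⟨i, j, h, rfl⟩)

lemma hmem (k : Fin 3) : X k * ((ell k + 1) * (ell k + 2)) ∈ I₁ :=
  Ideal.subset_span (Or.inr ⟨k, rfl⟩)

lemma T4mem :
    (4 * (X 0 + X 1 + X 2) + 6) * (X 0 + X 1 + X 2 + 2) ^ 2 ∈ I₁ := by
  have key : (4 * (X 0 + X 1 + X 2) + 6) * (X 0 + X 1 + X 2 + 2) ^ 2
      = (14 + 9 * X 0 + 9 * X 1 + 4 * X 2) * ((ell 0 + 1) * (ell 1 + 1))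
        + (5 + 4 * X 1) * ((ell 0 + 1) * (ell 2 + 1))
        + (5 + 4 * X 0) * ((ell 1 + 1) * (ell 2 + 1))
        - X 0 * ((ell 0 + 1) * (ell 0 + 2))
        - X 1 * ((ell 1 + 1) * (ell 1 + 2))
        - X 2 * ((ell 2 + 1) * (ell 2 + 2)) := by
    simp only [ell_eq]
    ring
  rw [key]
  refine Ideal.sub_mem _ (Ideal.sub_mem _ (Ideal.sub_mem _
    (Ideal.add_mem _ (Ideal.add_mem _ ?_ ?_) ?_) (hmem 0)) (hmem 1)) (hmem 2)
  · exact Ideal.mul_mem_left _ _ (gmem 0 1 (by decide))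
  · exact Ideal.mul_mem_left _ _ (gmem 0 2 (by decide))
  · exact Ideal.mul_mem_left _ _ (gmem 1 2 (by decide))

theorem stmt_1 :
    (X 0 + X 1 + X 2 + C (3/2 : ℚ)) * (X 0 + X 1 + X 2 + 2) ^ 2 ∈ I₁ := by
  have h4 : (C (1/4 : ℚ) : MvPolynomial (Fin 3) ℚ) * 4 = 1 := by
    rw [show (4 : MvPolynomial (Fin 3) ℚ) = C 4 by simp [map_ofNat],
      ← C_mul, ← C_1]
    norm_num
  have hC : (C (3/2 : ℚ) : MvPolynomial (Fin 3) ℚ) = C (1/4 : ℚ) * 6 := by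
    rw [show (6 : MvPolynomial (Fin 3) ℚ) = C 6 by simp [map_ofNat], ← C_mul]
    norm_num
  have key : ((X 0 + X 1 + X 2 + C (3/2 : ℚ)) * (X 0 + X 1 + X 2 + 2) ^ 2
        : MvPolynomial (Fin 3) ℚ)
      = C (1/4 : ℚ) * ((4 * (X 0 + X 1 + X 2) + 6) * (X 0 + X 1 + X 2 + 2) ^ 2) := by
    rw [hC]
    linear_combination (-(X 0 + X 1 + X 2) * (X 0 + X 1 + X 2 + 2) ^ 2) * h4
  rw [key]
  exact Ideal.mul_mem_left _ _ T4mem
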